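/- arXiv:2604.23275 — 5 statements merged into one kernel-verified Lean document; each statement's English description precedes it below -/
import Mathlib

section
/- The Umemura polynomial U_n(z; μ), defined as the n×n Wronskian-type determinant c_n · det(p_{2i-j}(z;μ))_{1≤i,j≤n} with c_n = ∏_{j=1}^n (2j+1)^{n-j}, is unchanged if the generating function of the entries p_k is modified by any even-power terms in ε: if q_k(z;μ) is defined by ∑ q_k ε^k = exp(zε + μ∑_{j≥1} ε^{2j-1}/(2j-1) + ∑_{j≥1} b_j ε^{2j}) for arbitrary constants b_j, then det(q_{2i-j})_{1≤i,j≤n} = det(p_{2i-j})_{1≤i,j≤n}. -/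
/-- The exponential of a formal power series (meaningful when the constant
coefficient vanishes): coefficient `n` of `exp f` is `∑_{k≤n} (coeff n (f^k))/k!`. -/
noncomputable def myExp (f : PowerSeries (Polynomial ℂ)) : PowerSeries (Polynomial ℂ) :=
  PowerSeries.mk fun n => ∑ k ∈ Finset.range (n + 1),
    ((Nat.factorial k : ℚ)⁻¹) • (PowerSeries.coeff n (f ^ k))

/-- The series `zε + μ ∑_{j≥1} ε^{2j-1}/(2j-1) = (z+μ)ε + ∑_{j≥1} (μ/(2j+1)) ε^{2j+1}`,
as a formal power series in `ε` over `ℂ[z]`. -/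
noncomputable def genSeries (μ : ℂ) : PowerSeries (Polynomial ℂ) :=
  PowerSeries.mk fun n =>
    (if n = 1 then Polynomial.X else 0) + (if Odd n then Polynomial.C (μ / (n : ℂ)) else 0)

/-- The Schur-type polynomials `p_k(z;μ)` defined by
`∑_{k≥0} p_k(z;μ) ε^k = exp(zε + μ ∑_{j≥1} ε^{2j-1}/(2j-1))`. -/
noncomputable def umemuraP (k : ℕ) (μ : ℂ) : Polynomial ℂ :=
  PowerSeries.coeff k (myExp (genSeries μ))

/-- An arbitrary even-power modification `∑_{j≥1} b_j ε^{2j}` of the exponent. -/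
noncomputable def evenSeries (b : ℕ → ℂ) : PowerSeries (Polynomial ℂ) :=
  PowerSeries.mk fun n => if n ≠ 0 ∧ Even n then Polynomial.C (b (n / 2)) else 0

/-- The modified coefficients `q_k(z;μ)` defined by
`∑ q_k ε^k = exp(zε + μ∑_{j≥1} ε^{2j-1}/(2j-1) + ∑_{j≥1} b_j ε^{2j})`. -/
noncomputable def umemuraQ (b : ℕ → ℂ) (k : ℕ) (μ : ℂ) : Polynomial ℂ :=
  PowerSeries.coeff k (myExp (genSeries μ + evenSeries b))

open PowerSeries Finset

private lemma coeffPowZero {f : PowerSeries (Polynomial ℂ)}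
    (hf : constantCoeff f = 0) {n k : ℕ} (h : n < k) :
    coeff n (f ^ k) = 0 :=
  X_pow_dvd_iff.mp (pow_dvd_pow_of_dvd (X_dvd_iff.mpr hf) k) n h

private lemma coeffPowMulZero {f g : PowerSeries (Polynomial ℂ)}
    (hf : constantCoeff f = 0) (hg : constantCoeff g = 0)
    {n j l : ℕ} (h : n < j + l) :
    coeff n (f ^ j * g ^ l) = 0 := by
  have hd : (X : PowerSeries (Polynomial ℂ)) ^ (j + l) ∣ f ^ j * g ^ l := by
    rw [pow_add]
    exact mul_dvd_mul (pow_dvd_pow_of_dvd (X_dvd_iff.mpr hf) j)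
      (pow_dvd_pow_of_dvd (X_dvd_iff.mpr hg) l)
  exact X_pow_dvd_iff.mp hd n h

private lemma coeff_myExp (f : PowerSeries (Polynomial ℂ)) (n : ℕ) :
    coeff n (myExp f) = ∑ k ∈ range (n + 1),
      ((Nat.factorial k : ℚ)⁻¹) • (coeff n (f ^ k)) := by
  simp [myExp]

private lemma myExp_add {f g : PowerSeries (Polynomial ℂ)}
    (hf : constantCoeff f = 0) (hg : constantCoeff g = 0) :
    myExp (f + g) = myExp f * myExp g := by
  ext n
  set T : ℕ → ℕ → Polynomial ℂ := fun j l =>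
    ((Nat.factorial j : ℚ)⁻¹ * (Nat.factorial l : ℚ)⁻¹) •
      coeff n (f ^ j * g ^ l) with hT
  have hT0 : ∀ j l, n < j + l → T j l = 0 := by
    intro j l h
    simp [hT, coeffPowMulZero hf hg h]
  have hL : coeff n (myExp (f + g)) =
      ∑ k ∈ range (n + 1), ∑ j ∈ range (k + 1), T j (k - j) := by
    rw [coeff_myExp]
    refine Finset.sum_congr rfl fun k hk => ?_
    rw [add_pow, map_sum, Finset.smul_sum]
    refine Finset.sum_congr rfl fun j hj => ?_
    have hjk : j ≤ k := Nat.lt_succ_iff.mp (Finset.mem_range.mp hj)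
    have hcast : ((k.choose j : ℕ) : PowerSeries (Polynomial ℂ)) =
        PowerSeries.C ((k.choose j : ℕ) : Polynomial ℂ) := by
      simp
    rw [hcast, PowerSeries.coeff_mul_C, hT]
    have : coeff n (f ^ j * g ^ (k - j)) * ((k.choose j : ℕ) : Polynomial ℂ)
        = ((k.choose j : ℕ) : ℚ) • coeff n (f ^ j * g ^ (k - j)) := by
      rw [mul_comm, ← nsmul_eq_mul, ← Nat.cast_smul_eq_nsmul ℚ]
    rw [this, smul_smul]
    congr 1
    have hch : (k.choose j : ℚ) * (Nat.factorial j) * (Nat.factorial (k - j))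
        = (Nat.factorial k : ℚ) := by
      exact_mod_cast congrArg (Nat.cast : ℕ → ℚ)
        (Nat.choose_mul_factorial_mul_factorial hjk)
    have h1 : (Nat.factorial j : ℚ) ≠ 0 := Nat.cast_ne_zero.mpr (Nat.factorial_ne_zero j)
    have h2 : (Nat.factorial (k - j) : ℚ) ≠ 0 := Nat.cast_ne_zero.mpr (Nat.factorial_ne_zero _)
    have h3 : (Nat.factorial k : ℚ) ≠ 0 := Nat.cast_ne_zero.mpr (Nat.factorial_ne_zero k)
    field_simp
    linarith [hch]
  have hR : coeff n (myExp f * myExp g) =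
      ∑ j ∈ range (n + 1), ∑ l ∈ range (n + 1), T j l := by
    rw [coeff_mul]
    have step1 : ∀ p : ℕ × ℕ, p ∈ antidiagonal n →
        coeff p.1 (myExp f) * coeff p.2 (myExp g)
        = ∑ j ∈ range (n + 1), ∑ l ∈ range (n + 1),
            ((Nat.factorial j : ℚ)⁻¹ * (Nat.factorial l : ℚ)⁻¹) •
              (coeff p.1 (f ^ j) * coeff p.2 (g ^ l)) := by
      intro p hp
      rw [Finset.HasAntidiagonal.mem_antidiagonal] at hp
      have hp1 : p.1 ≤ n := by omega
      have hp2 : p.2 ≤ n := by omega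
      rw [coeff_myExp, coeff_myExp]
      have e1 : ∑ k ∈ range (p.1 + 1), ((Nat.factorial k : ℚ)⁻¹) • coeff p.1 (f ^ k)
          = ∑ k ∈ range (n + 1), ((Nat.factorial k : ℚ)⁻¹) • coeff p.1 (f ^ k) := by
        refine Finset.sum_subset (by simp; omega) ?_
        intro k hk hk'
        simp only [Finset.mem_range] at hk hk'
        rw [coeffPowZero hf (by omega), smul_zero]
      have e2 : ∑ k ∈ range (p.2 + 1), ((Nat.factorial k : ℚ)⁻¹) • coeff p.2 (g ^ k)
          = ∑ k ∈ range (n + 1), ((Nat.factorial k : ℚ)⁻¹) • coeff p.2 (g ^ k) := by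
        refine Finset.sum_subset (by simp; omega) ?_
        intro k hk hk'
        simp only [Finset.mem_range] at hk hk'
        rw [coeffPowZero hg (by omega), smul_zero]
      rw [e1, e2, Finset.sum_mul_sum]
      refine Finset.sum_congr rfl fun j hj => Finset.sum_congr rfl fun l hl => ?_
      rw [smul_mul_smul_comm]
    rw [Finset.sum_congr rfl step1, Finset.sum_comm]
    refine Finset.sum_congr rfl fun j hj => ?_
    rw [Finset.sum_comm]
    refine Finset.sum_congr rfl fun l hl => ?_
    rw [← Finset.smul_sum, hT]
    congr 1
    rw [PowerSeries.coeff_mul]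
  rw [hL, hR]
  -- both sides equal the sum over the filtered product
  have key : ∑ k ∈ range (n + 1), ∑ j ∈ range (k + 1), T j (k - j)
      = ∑ p ∈ (range (n + 1) ×ˢ range (n + 1)).filter (fun p => p.1 + p.2 ≤ n),
          T p.1 p.2 := by
    rw [Finset.sum_sigma']
    refine Finset.sum_nbij' (fun x => (x.2, x.1 - x.2)) (fun p => ⟨p.1 + p.2, p.1⟩)
      ?_ ?_ ?_ ?_ ?_
    · rintro ⟨k, j⟩ hx
      simp only [Finset.mem_sigma, Finset.mem_range] at hx
      simp only [Finset.mem_filter, Finset.mem_product, Finset.mem_range]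
      omega
    · rintro ⟨j, l⟩ hp
      simp only [Finset.mem_filter, Finset.mem_product, Finset.mem_range] at hp
      simp only [Finset.mem_sigma, Finset.mem_range]
      omega
    · rintro ⟨k, j⟩ hx
      simp only [Finset.mem_sigma, Finset.mem_range] at hx
      show (⟨j + (k - j), j⟩ : Σ _ : ℕ, ℕ) = ⟨k, j⟩
      have e : j + (k - j) = k := by omega
      rw [e]
    · rintro ⟨j, l⟩ hp
      simp only [Finset.mem_filter, Finset.mem_product, Finset.mem_range] at hp
      show (j, j + l - j) = (j, l)
      have e : j + l - j = l := by omega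
      rw [e]
    · rintro ⟨k, j⟩ hx
      rfl
  have key2 : ∑ p ∈ (range (n + 1) ×ˢ range (n + 1)), T p.1 p.2
      = ∑ j ∈ range (n + 1), ∑ l ∈ range (n + 1), T j l :=
    Finset.sum_product' (range (n + 1)) (range (n + 1)) T
  have key3 : ∑ p ∈ (range (n + 1) ×ˢ range (n + 1)).filter (fun p => p.1 + p.2 ≤ n), T p.1 p.2
      = ∑ p ∈ (range (n + 1) ×ˢ range (n + 1)), T p.1 p.2 := by
    refine Finset.sum_subset (Finset.filter_subset _ _) ?_
    intro p hp hnp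
    simp only [Finset.mem_filter, Finset.mem_product, Finset.mem_range] at hp hnp
    exact hT0 p.1 p.2 (by omega)
  rw [key, key3, key2]

private lemma constCoeff_gen (μ : ℂ) : constantCoeff (genSeries μ) = 0 := by
  rw [← coeff_zero_eq_constantCoeff]
  simp [genSeries, Nat.odd_iff]

private lemma constCoeff_even (b : ℕ → ℂ) : constantCoeff (evenSeries b) = 0 := by
  rw [← coeff_zero_eq_constantCoeff]
  simp [evenSeries]

private lemma coeff_myExp_odd {f : PowerSeries (Polynomial ℂ)}
    (hf : ∀ m, Odd m → coeff m f = 0) {m : ℕ} (hm : Odd m) :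
    coeff m (myExp f) = 0 := by
  have hpow : ∀ (k m : ℕ), Odd m → coeff m (f ^ k) = 0 := by
    intro k
    induction k with
    | zero =>
      intro m hm
      rw [pow_zero, PowerSeries.coeff_one, if_neg]
      rintro rfl
      have := Nat.odd_iff.mp hm
      omega
    | succ k ih =>
      intro m hm
      rw [pow_succ, coeff_mul]
      refine Finset.sum_eq_zero fun p hp => ?_
      rw [Finset.HasAntidiagonal.mem_antidiagonal] at hp
      rcases Nat.even_or_odd p.1 with h1 | h1
      · have h2 : Odd p.2 := by
          rw [Nat.odd_iff] at hm ⊢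
          rw [Nat.even_iff] at h1
          omega
        rw [hf p.2 h2, mul_zero]
      · rw [ih p.1 h1, zero_mul]
  rw [coeff_myExp]
  exact Finset.sum_eq_zero fun k _ => by rw [hpow k m hm, smul_zero]

private lemma coeff_even_odd (b : ℕ → ℂ) {m : ℕ} (hm : Odd m) :
    coeff m (evenSeries b) = 0 := by
  simp only [evenSeries, coeff_mk, ite_eq_right_iff]
  intro h
  exact absurd h.2 ((Nat.not_even_iff_odd.mpr hm))

private lemma coeff_myExp_zero {f : PowerSeries (Polynomial ℂ)} :
    coeff 0 (myExp f) = 1 := by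
  rw [coeff_myExp]
  simp

theorem stmt2 :
    ∀ (n : ℕ) (μ : ℂ) (b : ℕ → ℂ),
      Matrix.det (Matrix.of fun i j : Fin n =>
        if (j : ℕ) ≤ 2 * (i : ℕ) + 1 then umemuraQ b (2 * (i : ℕ) + 1 - (j : ℕ)) μ else 0) =
      Matrix.det (Matrix.of fun i j : Fin n =>
        if (j : ℕ) ≤ 2 * (i : ℕ) + 1 then umemuraP (2 * (i : ℕ) + 1 - (j : ℕ)) μ else 0) := by
  intro n μ b
  set r : ℕ → Polynomial ℂ := fun m => coeff m (myExp (evenSeries b)) with hr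
  have hr0 : r 0 = 1 := coeff_myExp_zero
  have hrodd : ∀ m, Odd m → r m = 0 := fun m hm =>
    coeff_myExp_odd (fun m' hm' => coeff_even_odd b hm') hm
  have hq : ∀ k, umemuraQ b k μ =
      ∑ a ∈ range (k + 1), r a * umemuraP (k - a) μ := by
    intro k
    have : genSeries μ + evenSeries b = evenSeries b + genSeries μ := add_comm _ _
    rw [umemuraQ, this, myExp_add (constCoeff_even b) (constCoeff_gen μ), coeff_mul,
      Finset.Nat.sum_antidiagonal_eq_sum_range_succ_mk]
    rfl
  set P : Matrix (Fin n) (Fin n) (Polynomial ℂ) := Matrix.of fun i j : Fin n =>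
    if (j : ℕ) ≤ 2 * (i : ℕ) + 1 then umemuraP (2 * (i : ℕ) + 1 - (j : ℕ)) μ else 0 with hP
  set L : Matrix (Fin n) (Fin n) (Polynomial ℂ) := Matrix.of fun i k : Fin n =>
    if (k : ℕ) ≤ (i : ℕ) then r (2 * ((i : ℕ) - (k : ℕ))) else 0 with hL
  have hQ : (Matrix.of fun i j : Fin n =>
      if (j : ℕ) ≤ 2 * (i : ℕ) + 1 then umemuraQ b (2 * (i : ℕ) + 1 - (j : ℕ)) μ else 0)
      = L * P := by
    refine Matrix.ext fun i j => ?_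
    rw [Matrix.mul_apply]
    simp only [Matrix.of_apply, hL, hP]
    by_cases hij : (j : ℕ) ≤ 2 * (i : ℕ) + 1
    · rw [if_pos hij, hq]
      set m := 2 * (i : ℕ) + 1 - (j : ℕ) with hm
      -- RHS over Fin n → over range n → over range (i+1) reflected
      have fin2range : ∑ k : Fin n, (if (k : ℕ) ≤ (i : ℕ) then r (2 * ((i : ℕ) - (k : ℕ))) else 0) *
            (if (j : ℕ) ≤ 2 * (k : ℕ) + 1 then umemuraP (2 * (k : ℕ) + 1 - (j : ℕ)) μ else 0)
          = ∑ k ∈ range n, (if k ≤ (i : ℕ) then r (2 * ((i : ℕ) - k)) else 0) *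
            (if (j : ℕ) ≤ 2 * k + 1 then umemuraP (2 * k + 1 - (j : ℕ)) μ else 0) :=
        Fin.sum_univ_eq_sum_range (fun k => (if k ≤ (i : ℕ) then r (2 * ((i : ℕ) - k)) else 0) *
            (if (j : ℕ) ≤ 2 * k + 1 then umemuraP (2 * k + 1 - (j : ℕ)) μ else 0)) n
      rw [fin2range]
      have shrink : ∑ k ∈ range n, (if k ≤ (i : ℕ) then r (2 * ((i : ℕ) - k)) else 0) *
            (if (j : ℕ) ≤ 2 * k + 1 then umemuraP (2 * k + 1 - (j : ℕ)) μ else 0)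
          = ∑ k ∈ range ((i : ℕ) + 1), (if k ≤ (i : ℕ) then r (2 * ((i : ℕ) - k)) else 0) *
            (if (j : ℕ) ≤ 2 * k + 1 then umemuraP (2 * k + 1 - (j : ℕ)) μ else 0) := by
        refine (Finset.sum_subset (by simp : range ((i : ℕ) + 1) ⊆ range n) ?_).symm
        intro k hk hk'
        simp only [Finset.mem_range] at hk hk'
        rw [if_neg (by omega), zero_mul]
      have reflect : ∑ k ∈ range ((i : ℕ) + 1), (if k ≤ (i : ℕ) then r (2 * ((i : ℕ) - k)) else 0) *
            (if (j : ℕ) ≤ 2 * k + 1 then umemuraP (2 * k + 1 - (j : ℕ)) μ else 0)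
          = ∑ t ∈ range ((i : ℕ) + 1),
            (if ((i : ℕ) + 1 - 1 - t) ≤ (i : ℕ) then r (2 * ((i : ℕ) - ((i : ℕ) + 1 - 1 - t))) else 0) *
            (if (j : ℕ) ≤ 2 * ((i : ℕ) + 1 - 1 - t) + 1 then
              umemuraP (2 * ((i : ℕ) + 1 - 1 - t) + 1 - (j : ℕ)) μ else 0) :=
        (Finset.sum_range_reflect (fun k => (if k ≤ (i : ℕ) then r (2 * ((i : ℕ) - k)) else 0) *
            (if (j : ℕ) ≤ 2 * k + 1 then umemuraP (2 * k + 1 - (j : ℕ)) μ else 0)) ((i : ℕ) + 1)).symm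
      rw [shrink, reflect]
      -- now index t, k = i - t
      have congr1 : ∀ t ∈ range ((i : ℕ) + 1),
          (if ((i : ℕ) + 1 - 1 - t) ≤ (i : ℕ) then r (2 * ((i : ℕ) - ((i : ℕ) + 1 - 1 - t))) else 0) *
            (if (j : ℕ) ≤ 2 * ((i : ℕ) + 1 - 1 - t) + 1 then
              umemuraP (2 * ((i : ℕ) + 1 - 1 - t) + 1 - (j : ℕ)) μ else 0)
          = if 2 * t ≤ m then r (2 * t) * umemuraP (m - 2 * t) μ else 0 := by
        intro t ht
        simp only [Finset.mem_range] at ht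
        have hti : t ≤ (i : ℕ) := by omega
        have e1 : (i : ℕ) + 1 - 1 - t = (i : ℕ) - t := by omega
        rw [e1, if_pos (by omega), show (i : ℕ) - ((i : ℕ) - t) = t by omega]
        by_cases h2 : 2 * t ≤ m
        · rw [if_pos (by omega), if_pos h2, show 2 * ((i : ℕ) - t) + 1 - (j : ℕ) = m - 2 * t by omega]
        · rw [if_neg (by omega), if_neg h2, mul_zero]
      rw [Finset.sum_congr rfl congr1]
      -- LHS: sum over range (m+1), kill odd, reindex a = 2t
      have killodd : ∑ a ∈ range (m + 1), r a * umemuraP (m - a) μ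
          = ∑ a ∈ range (m + 1), (if Even a then r a * umemuraP (m - a) μ else 0) := by
        refine Finset.sum_congr rfl fun a ha => ?_
        by_cases hev : Even a
        · rw [if_pos hev]
        · rw [if_neg hev, hrodd a (Nat.not_even_iff_odd.mp hev), zero_mul]
      rw [killodd, ← Finset.sum_filter, ← Finset.sum_filter]
      refine Finset.sum_nbij' (fun a => a / 2) (fun t => 2 * t) ?_ ?_ ?_ ?_ ?_
      · intro a ha
        simp only [Finset.mem_filter, Finset.mem_range] at ha ⊢
        obtain ⟨c, hc⟩ := ha.2
        constructor <;> omega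
      · intro t ht
        simp only [Finset.mem_filter, Finset.mem_range] at ht ⊢
        exact ⟨by omega, ⟨t, by omega⟩⟩
      · intro a ha
        simp only [Finset.mem_filter, Finset.mem_range] at ha
        obtain ⟨c, hc⟩ := ha.2
        show 2 * (a / 2) = a
        omega
      · intro t ht
        show (2 * t) / 2 = t
        omega
      · intro a ha
        simp only [Finset.mem_filter, Finset.mem_range] at ha
        obtain ⟨c, hc⟩ := ha.2
        have e : 2 * (a / 2) = a := by omega
        rw [e]
    · rw [if_neg hij]
      refine (Finset.sum_eq_zero fun k _ => ?_).symm
      by_cases hk : (k : ℕ) ≤ (i : ℕ)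
      · rw [if_neg (show ¬((j : ℕ) ≤ 2 * (k : ℕ) + 1) by omega), mul_zero]
      · rw [if_neg hk, zero_mul]
  rw [hQ, Matrix.det_mul]
  have hLdet : L.det = 1 := by
    have htri : L.BlockTriangular (OrderDual.toDual) := by
      intro i k hik
      simp only [hL, Matrix.of_apply]
      rw [if_neg]
      exact Nat.not_le.mpr (Fin.lt_iff_val_lt_val.mp hik)
    rw [Matrix.det_of_lowerTriangular L htri]
    refine Finset.prod_eq_one fun i _ => ?_
    simp [hL, hr0]
  rw [hLdet, one_mul]
end

section
/- Umemura polynomials satisfy the symmetry U_n(−z; −μ) = (−1)^{n(n+1)/2} U_n(z; μ) for all n ≥ −1. -/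
open Polynomial

theorem rhs_ne' (μ : ℂ) (U : ℂ[X]) (hU : U ≠ 0) :
    -X * (U * derivative (derivative U) - (derivative U) ^ 2)
      - U * derivative U + (X + C μ) * U ^ 2 ≠ 0 := by
  by_cases hd : U.natDegree = 0
  · obtain ⟨c, rfl⟩ := natDegree_eq_zero.mp hd
    have hc : c ≠ 0 := fun h => hU (by simp [h])
    have he : -X * (C c * derivative (derivative (C c)) - (derivative (C c)) ^ 2)
        - C c * derivative (C c) + (X + C μ) * (C c) ^ 2 = (X + C μ) * (C c) ^ 2 := by
      simp
    rw [he]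
    exact mul_ne_zero (X_add_C_ne_zero μ) (pow_ne_zero _ hU)
  · have hd1 : 1 ≤ U.natDegree := Nat.one_le_iff_ne_zero.mpr hd
    intro h
    have hco := congrArg (fun p => coeff p (2 * U.natDegree + 1)) h
    simp only [coeff_add, coeff_sub, neg_mul, coeff_neg, coeff_zero] at hco
    have hU' : (derivative U).natDegree ≤ U.natDegree - 1 := natDegree_derivative_le U
    have hU'' : (derivative (derivative U)).natDegree ≤ U.natDegree - 1 :=
      (natDegree_derivative_le _).trans (by omega)
    have hpow : (U ^ 2).natDegree = 2 * U.natDegree := by rw [natDegree_pow]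
    have t1 : (X * (U * derivative (derivative U) - (derivative U) ^ 2)).coeff (2 * U.natDegree + 1) = 0 := by
      rw [coeff_X_mul, coeff_sub,
        coeff_eq_zero_of_natDegree_lt (lt_of_le_of_lt (natDegree_mul_le)
          (by omega : U.natDegree + (derivative (derivative U)).natDegree < 2 * U.natDegree)),
        coeff_eq_zero_of_natDegree_lt (lt_of_le_of_lt (natDegree_pow_le)
          (by omega : 2 * (derivative U).natDegree < 2 * U.natDegree)), sub_zero]
    have t2 : (U * derivative U).coeff (2 * U.natDegree + 1) = 0 :=
      coeff_eq_zero_of_natDegree_lt (lt_of_le_of_lt (natDegree_mul_le) (by omega))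
    have t3 : ((X + C μ) * U ^ 2).coeff (2 * U.natDegree + 1) = U.leadingCoeff ^ 2 := by
      have z1 : (U ^ 2).coeff (2 * U.natDegree + 1) = 0 :=
        coeff_eq_zero_of_natDegree_lt (by rw [hpow]; omega)
      have z2 : (U ^ 2).coeff (2 * U.natDegree) = U.leadingCoeff ^ 2 := by
        rw [← hpow, coeff_natDegree, leadingCoeff_pow]
      rw [add_mul, coeff_add, coeff_X_mul, coeff_C_mul, z1, z2, mul_zero, add_zero]
    rw [t1, t2, t3] at hco
    simp only [neg_zero, sub_zero, zero_add] at hco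
    exact (leadingCoeff_ne_zero.mpr hU) (pow_eq_zero_iff (by norm_num) |>.mp hco)


theorem epow' (a : ℤ) (ha : -1 ≤ a) :
    (-1 : ℂ[X]) ^ (((a+1+1) * ((a+1+1) + 1) / 2).toNat)
      = -((-1 : ℂ[X]) ^ ((a * (a + 1) / 2).toNat)) := by
  have h5 : 0 ≤ a * (a + 1) := by
    rcases (by omega : a = -1 ∨ 0 ≤ a) with h | h
    · simp [h]
    · exact mul_nonneg h (by omega)
  have h1 : 2 * (a * (a + 1) / 2) = a * (a + 1) :=
    Int.mul_ediv_cancel' (Int.even_mul_succ_self a).two_dvd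
  have h2 : 2 * ((a+1+1) * ((a+1+1) + 1) / 2) = (a+1+1) * ((a+1+1) + 1) := by
    apply Int.mul_ediv_cancel'
    have := (Int.even_mul_succ_self (a + 2)).two_dvd
    rw [show a + 1 + 1 = a + 2 by ring]
    exact this
  have h3 : (a+1+1) * ((a+1+1) + 1) = a * (a + 1) + 2 * (2 * a + 3) := by ring
  obtain ⟨p, hp⟩ : ∃ p, a * (a + 1) / 2 = p := ⟨_, rfl⟩
  obtain ⟨q, hq⟩ : ∃ q, (a+1+1) * ((a+1+1) + 1) / 2 = q := ⟨_, rfl⟩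
  have h4 : q = p + (2 * a + 3) := by
    rw [hp] at h1; rw [hq] at h2; linarith
  have h6 : 0 ≤ p := by rw [← hp]; exact Int.ediv_nonneg h5 (by norm_num)
  rw [hp, hq]
  have h7 : q.toNat = p.toNat + 2 * ((a + 1).toNat) + 1 := by omega
  rw [h7, pow_add, pow_add, pow_mul, neg_one_sq, one_pow, pow_one, mul_one]
  ring

theorem dercomp' (p q : ℂ[X]) (h : p.comp (-X) = q) :
    (derivative p).comp (-X) = -derivative q := by
  have e := congrArg derivative h
  rw [derivative_comp] at e
  simp only [derivative_neg, derivative_X] at e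
  linear_combination -e

theorem stmt6 :
    ∀ (U : ℤ → ℂ → Polynomial ℂ),
      (∀ μ : ℂ, U (-1) μ = 1) → (∀ μ : ℂ, U 0 μ = 1) →
      (∀ (μ : ℂ) (n : ℤ), 0 ≤ n →
        U (n + 1) μ * U (n - 1) μ =
          -Polynomial.X *
              (U n μ * Polynomial.derivative (Polynomial.derivative (U n μ)) -
                (Polynomial.derivative (U n μ)) ^ 2) -
            U n μ * Polynomial.derivative (U n μ) +
            (Polynomial.X + Polynomial.C μ) * (U n μ) ^ 2) →
      ∀ (n : ℤ), -1 ≤ n → ∀ (μ : ℂ),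
        (U n (-μ)).comp (-Polynomial.X) =
          (-1 : Polynomial ℂ) ^ ((n * (n + 1) / 2).toNat) * U n μ := by
  intro U hm1 h0 hrec
  have key : ∀ n : ℤ, -1 ≤ n →
      (∀ μ : ℂ, U n μ ≠ 0 ∧ (U n (-μ)).comp (-X) =
        (-1 : ℂ[X]) ^ ((n * (n + 1) / 2).toNat) * U n μ) ∧
      (∀ μ : ℂ, U (n+1) μ ≠ 0 ∧ (U (n+1) (-μ)).comp (-X) =
        (-1 : ℂ[X]) ^ (((n+1) * ((n+1) + 1) / 2).toNat) * U (n+1) μ) := by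
    intro n hn
    refine Int.le_induction (motive := fun n _ =>
      (∀ μ : ℂ, U n μ ≠ 0 ∧ (U n (-μ)).comp (-X) =
        (-1 : ℂ[X]) ^ ((n * (n + 1) / 2).toNat) * U n μ) ∧
      (∀ μ : ℂ, U (n+1) μ ≠ 0 ∧ (U (n+1) (-μ)).comp (-X) =
        (-1 : ℂ[X]) ^ (((n+1) * ((n+1) + 1) / 2).toNat) * U (n+1) μ)) ?_ ?_ n hn
    · have e0 : (-1 : ℤ) + 1 = 0 := by norm_num
      constructor
      · intro μ
        rw [hm1, hm1]
        norm_num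
      · intro μ
        rw [e0, h0, h0]
        norm_num
    · intro n hn ih
      obtain ⟨ihn, ihn1⟩ := ih
      refine ⟨ihn1, ?_⟩
      intro μ
      obtain ⟨hWne, hWsym⟩ := ihn1 μ
      obtain ⟨hne_n, hsym_n⟩ := ihn μ
      have em : n + 1 - 1 = n := by ring
      have hrec1 := hrec μ (n+1) (by omega)
      rw [em] at hrec1
      have hR := rhs_ne' μ (U (n+1) μ) hWne
      have hne2 : U (n+1+1) μ ≠ 0 := by
        intro h
        exact hR (by rw [← hrec1, h, zero_mul])
      refine ⟨hne2, ?_⟩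
      -- symmetry part
      have hrec2 := hrec (-μ) (n+1) (by omega)
      rw [em] at hrec2
      have hcomp := congrArg (fun p => p.comp (-(X : ℂ[X]))) hrec2
      simp only [mul_comp, sub_comp, add_comp, neg_comp, X_comp, C_comp, pow_comp] at hcomp
      -- derivative facts
      have hd1 : (derivative (U (n+1) (-μ))).comp (-X) =
          -((-1 : ℂ[X]) ^ (((n+1) * ((n+1) + 1) / 2).toNat) * derivative (U (n+1) μ)) := by
        have := dercomp' _ _ hWsym
        rw [this, derivative_mul]
        simp [derivative_pow]
      have hd2 : (derivative (derivative (U (n+1) (-μ)))).comp (-X) =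
          (-1 : ℂ[X]) ^ (((n+1) * ((n+1) + 1) / 2).toNat) * derivative (derivative (U (n+1) μ)) := by
        have := dercomp' _ _ hd1
        rw [this, derivative_neg, derivative_mul]
        simp [derivative_pow]
      rw [hWsym, hsym_n, hd1, hd2] at hcomp
      rw [show ((C (-μ)) : ℂ[X]) = -C μ from map_neg C μ] at hcomp
      -- abbreviations for linear_combination
      set A := (U (n+1+1) (-μ)).comp (-X) with hA
      set En := (-1 : ℂ[X]) ^ ((n * (n + 1) / 2).toNat) with hEn
      set E1 := (-1 : ℂ[X]) ^ (((n+1) * ((n+1) + 1) / 2).toNat) with hE1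
      set W := U (n+1) μ with hW
      set U2 := U (n+1+1) μ with hU2
      set Un := U n μ with hUn
      have hEn2 : En ^ 2 = 1 := by
        rw [hEn, ← pow_mul, mul_comm, pow_mul, neg_one_sq, one_pow]
      have hE12 : E1 ^ 2 = 1 := by
        rw [hE1, ← pow_mul, mul_comm, pow_mul, neg_one_sq, one_pow]
      have hG : A * Un = (-En * U2) * Un := by
        linear_combination En * hcomp + (-(A * Un)) * hEn2 +
          (En * (X * (W * derivative (derivative W) - (derivative W)^2) + W * derivative W
            - (X + C μ) * W ^ 2)) * hE12 + En * hrec1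
      have hfin : A = -En * U2 := mul_right_cancel₀ hne_n hG
      rw [epow' n hn, hfin, hEn]
  intro n hn μ
  exact ((key n hn).1 μ).2
end

section
/- The Umemura polynomial U_n(z;μ) is a monic polynomial in z of degree n(n+1)/2, for every integer n ≥ 1. -/
set_option maxHeartbeats 1000000
open Polynomial Finset


lemma genSeries_coeff_zero (μ : ℂ) : PowerSeries.coeff 0 (genSeries μ) = 0 := by
  simp [genSeries]

lemma genSeries_coeff_one (μ : ℂ) : PowerSeries.coeff 1 (genSeries μ) = X + C μ := by
  simp [genSeries]

lemma genSeries_natDegree_le (μ : ℂ) (m : ℕ) :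
    (PowerSeries.coeff m (genSeries μ)).natDegree ≤ 1 := by
  simp only [genSeries, PowerSeries.coeff_mk]
  apply (natDegree_add_le _ _).trans
  rw [sup_le_iff]
  constructor
  · split <;> simp [natDegree_X_le]
  · split <;> simp

lemma pow_coeff_lt (μ : ℂ) : ∀ (j k : ℕ), k < j →
    PowerSeries.coeff k ((genSeries μ) ^ j) = 0 := by
  intro j
  induction j with
  | zero => omega
  | succ j ih =>
    intro k hk
    rw [pow_succ, mul_comm, PowerSeries.coeff_mul]
    apply Finset.sum_eq_zero
    rintro ⟨a, b⟩ hab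
    rw [Finset.HasAntidiagonal.mem_antidiagonal] at hab
    rcases Nat.eq_zero_or_pos a with h | h
    · subst h; simp [genSeries_coeff_zero]
    · rw [ih b (by omega), mul_zero]

lemma pow_coeff_diag (μ : ℂ) : ∀ k : ℕ,
    PowerSeries.coeff k ((genSeries μ) ^ k) = (X + C μ) ^ k := by
  intro k
  induction k with
  | zero => simp
  | succ k ih =>
    rw [pow_succ, mul_comm, PowerSeries.coeff_mul]
    rw [Finset.sum_eq_single (1, k)]
    · rw [genSeries_coeff_one, ih, pow_succ, mul_comm]
    · rintro ⟨a, b⟩ hab hne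
      rw [Finset.HasAntidiagonal.mem_antidiagonal] at hab
      rcases Nat.eq_zero_or_pos a with h | h
      · subst h; simp [genSeries_coeff_zero]
      · have hb : b < k := by
          rcases Nat.lt_or_ge b k with h' | h'
          · exact h'
          · exfalso; have : b = k := by omega
            apply hne; simp at hab ⊢; omega
        rw [pow_coeff_lt μ k b hb, mul_zero]
    · intro h
      exfalso
      exact h (by simp [Finset.mem_antidiagonal, Nat.add_comm])

lemma pow_coeff_natDegree_le (μ : ℂ) : ∀ (j k : ℕ),
    (PowerSeries.coeff k ((genSeries μ) ^ j)).natDegree ≤ j := by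
  intro j
  induction j with
  | zero =>
    intro k
    rcases Nat.eq_zero_or_pos k with h | h
    · subst h; simp
    · simp [PowerSeries.coeff_one, Nat.pos_iff_ne_zero.mp h]
  | succ j ih =>
    intro k
    rw [pow_succ', PowerSeries.coeff_mul]
    apply natDegree_sum_le_of_forall_le
    intro p hp
    have h := natDegree_mul_le_of_le (genSeries_natDegree_le μ p.1) (ih p.2)
    omega

lemma myNatDegree_smul_le (q : ℚ) (p : Polynomial ℂ) : (q • p).natDegree ≤ p.natDegree := by
  apply natDegree_le_iff_coeff_eq_zero.mpr
  intro m hm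
  rw [coeff_smul, coeff_eq_zero_of_natDegree_lt hm, smul_zero]

lemma umemuraP_natDegree_le (k : ℕ) (μ : ℂ) : (umemuraP k μ).natDegree ≤ k := by
  unfold umemuraP myExp
  rw [PowerSeries.coeff_mk]
  apply natDegree_sum_le_of_forall_le
  intro j hj
  rw [Finset.mem_range] at hj
  refine le_trans (myNatDegree_smul_le _ _) (le_trans (pow_coeff_natDegree_le μ j k) (by omega))

lemma umemuraP_coeff_self (k : ℕ) (μ : ℂ) :
    (umemuraP k μ).coeff k = ((k.factorial : ℂ))⁻¹ := by
  unfold umemuraP myExp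
  rw [PowerSeries.coeff_mk, finset_sum_coeff]
  rw [Finset.sum_eq_single k]
  · rw [coeff_smul, pow_coeff_diag]
    have h1 : ((X + C μ) ^ k).coeff k = 1 := by
      have hm : ((X + C μ) ^ k).Monic := (monic_X_add_C μ).pow k
      have hd : ((X + C μ) ^ k).natDegree = k := by
        rw [(monic_X_add_C μ).natDegree_pow, natDegree_X_add_C, mul_one]
      have := hm.coeff_natDegree
      rwa [hd] at this
    rw [h1, Rat.smul_def, mul_one]
    push_cast
    ring
  · intro j hj hne
    rw [Finset.mem_range] at hj
    rw [coeff_smul, coeff_eq_zero_of_natDegree_lt, smul_zero]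
    exact lt_of_le_of_lt (pow_coeff_natDegree_le μ j k) (by omega)
  · intro h; exfalso; exact h (Finset.self_mem_range_succ k)

lemma oddProd (n : ℕ) : (∏ j ∈ Icc 1 n, (2*j+1)) * (2^n * n.factorial) = (2*n+1).factorial := by
  induction n with
  | zero => simp
  | succ n ih =>
    rw [Finset.prod_Icc_succ_top (by omega)]
    have h1 : 2*(n+1)+1 = (2*n+1) + 1 + 1 := by ring
    rw [h1, Nat.factorial_succ (2*n+1+1), Nat.factorial_succ (2*n+1), Nat.factorial_succ n, ← ih]
    ring

lemma keyNat (n : ℕ) :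
    (∏ j ∈ Icc 1 n, (2*j+1)^(n-j)) * ((2^(∑ i ∈ range n, i)) * ∏ x ∈ range n, x.factorial)
      = ∏ i ∈ range n, (2*i+1).factorial := by
  induction n with
  | zero => simp
  | succ n ih =>
    have hA : (∏ j ∈ Icc 1 (n+1), (2*j+1)^(n+1-j))
        = (∏ j ∈ Icc 1 n, (2*j+1)^(n-j)) * (∏ j ∈ Icc 1 n, (2*j+1)) := by
      rw [Finset.prod_Icc_succ_top (by omega), Nat.sub_self, pow_zero, mul_one,
        ← Finset.prod_mul_distrib]
      apply Finset.prod_congr rfl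
      intro j hj
      rw [Finset.mem_Icc] at hj
      have : n + 1 - j = (n - j) + 1 := by omega
      rw [this, pow_succ]
    rw [hA, Finset.sum_range_succ, Finset.prod_range_succ, Finset.prod_range_succ,
      ← ih, ← oddProd n, pow_add]
    ring

lemma vdm_id (n : ℕ) : (Matrix.vandermonde fun i : Fin n => ((i : ℕ) : ℂ)).det
    = ((∏ x ∈ range n, x.factorial : ℕ) : ℂ) := by
  cases n with
  | zero => simp [Matrix.det_vandermonde]
  | succ n =>
    rw [Nat.prod_range_succ_factorial]
    exact Matrix.det_vandermonde_id_eq_superFactorial n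

lemma vdm (n : ℕ) : (Matrix.vandermonde fun i : Fin n => ((2*(i:ℕ)+1 : ℕ) : ℂ)).det
    = (2:ℂ)^(∑ i ∈ range n, i) * ((∏ x ∈ range n, x.factorial : ℕ) : ℂ) := by
  have h1 : (fun i : Fin n => ((2*(i:ℕ)+1 : ℕ) : ℂ))
      = fun i : Fin n => ((2:ℂ)*((i:ℕ):ℂ)) + 1 := by
    funext i; push_cast; ring
  rw [h1, Matrix.det_vandermonde_add]
  have h2 : Matrix.vandermonde (fun i : Fin n => (2:ℂ)*((i:ℕ):ℂ))
      = Matrix.of fun i j : Fin n =>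
        (2:ℂ)^(j:ℕ) * (Matrix.vandermonde fun i : Fin n => ((i:ℕ):ℂ)) i j := by
    ext i j
    simp [Matrix.vandermonde, mul_pow]
  rw [h2, Matrix.det_mul_row, vdm_id]
  congr 1
  rw [Finset.prod_pow_eq_pow_sum Finset.univ (fun j : Fin n => (j : ℕ)) (2:ℂ),
    Fin.sum_univ_eq_sum_range (fun i => i) n]

lemma coeff_prod_top {ι : Type*} (s : Finset ι) (f : ι → Polynomial ℂ) (d : ι → ℕ)
    (h : ∀ i ∈ s, (f i).natDegree ≤ d i) :
    (∏ i ∈ s, f i).coeff (∑ i ∈ s, d i) = ∏ i ∈ s, (f i).coeff (d i) := by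
  induction s using Finset.cons_induction with
  | empty => simp
  | cons a s ha ih =>
    rw [Finset.prod_cons, Finset.sum_cons,
      coeff_mul_add_eq_of_natDegree_le (h a (Finset.mem_cons_self a s))
        (le_trans (natDegree_prod_le s f)
          (Finset.sum_le_sum fun i hi => h i (Finset.mem_cons_of_mem hi))),
      ih (fun i hi => h i (Finset.mem_cons_of_mem hi)), Finset.prod_cons]


/-- The Umemura polynomial `U_n(z;μ) = c_n · det(p_{2i-j}(z;μ))_{1≤i,j≤n}`,
with `c_n = ∏_{j=1}^n (2j+1)^{n-j}`, where entries with negative index are zero. -/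
noncomputable def umemuraU (n : ℕ) (μ : ℂ) : Polynomial ℂ :=
  ((∏ j ∈ Finset.Icc 1 n, ((2 * j + 1 : ℕ) : ℂ) ^ (n - j))) •
    Matrix.det (Matrix.of fun i j : Fin n =>
      if (j : ℕ) ≤ 2 * (i : ℕ) + 1 then umemuraP (2 * (i : ℕ) + 1 - (j : ℕ)) μ else 0)


noncomputable def Lmat (n : ℕ) : Matrix (Fin n) (Fin n) ℂ :=
  Matrix.of fun i j =>
    if (j:ℕ) ≤ 2*(i:ℕ)+1 then (((2*(i:ℕ)+1-(j:ℕ)).factorial : ℂ))⁻¹ else 0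

lemma Lmat_det (n : ℕ) : (Lmat n).det =
    (∏ i : Fin n, (((2*(i:ℕ)+1).factorial : ℂ))⁻¹) *
      ((2:ℂ)^(∑ i ∈ range n, i) * ((∏ x ∈ range n, x.factorial : ℕ) : ℂ)) := by
  have hL : Lmat n = Matrix.of fun i j : Fin n =>
      (((2*(i:ℕ)+1).factorial : ℂ))⁻¹ *
        ((descPochhammer ℂ (j:ℕ)).eval (((2*(i:ℕ)+1 : ℕ)) : ℂ)) := by
    ext i j
    rw [Lmat, Matrix.of_apply, Matrix.of_apply, descPochhammer_eval_eq_descFactorial]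
    by_cases h : (j:ℕ) ≤ 2*(i:ℕ)+1
    · rw [if_pos h]
      have hf := Nat.factorial_mul_descFactorial h
      have hc : ((2*(i:ℕ)+1-(j:ℕ)).factorial : ℂ) * ((2*(i:ℕ)+1).descFactorial (j:ℕ) : ℂ)
          = ((2*(i:ℕ)+1).factorial : ℂ) := by exact_mod_cast congrArg (Nat.cast : ℕ → ℂ) hf
      have h0 : ((2*(i:ℕ)+1).factorial : ℂ) ≠ 0 := Nat.cast_ne_zero.mpr (Nat.factorial_ne_zero _)
      have h1 : (((2*(i:ℕ)+1-(j:ℕ)).factorial : ℂ)) ≠ 0 :=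
        Nat.cast_ne_zero.mpr (Nat.factorial_ne_zero _)
      field_simp
      linear_combination -hc
    · rw [if_neg h, Nat.descFactorial_eq_zero_iff_lt.mpr (by omega), Nat.cast_zero, mul_zero]
  rw [hL]
  rw [show (Matrix.of fun i j : Fin n =>
      (((2*(i:ℕ)+1).factorial : ℂ))⁻¹ *
        ((descPochhammer ℂ (j:ℕ)).eval (((2*(i:ℕ)+1 : ℕ)) : ℂ))) =
      Matrix.of fun i j : Fin n =>
      (((2*(i:ℕ)+1).factorial : ℂ))⁻¹ *
        (Matrix.of fun i j : Fin n =>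
          ((descPochhammer ℂ (j:ℕ)).eval (((2*(i:ℕ)+1 : ℕ)) : ℂ))) i j from rfl]
  rw [Matrix.det_mul_column]
  rw [← Matrix.det_eval_matrixOfPolynomials_eq_det_vandermonde
    (fun i : Fin n => ((2*(i:ℕ)+1 : ℕ) : ℂ)) (fun j : Fin n => descPochhammer ℂ (j:ℕ))
    (fun j => descPochhammer_natDegree ℂ (j:ℕ)) (fun j => monic_descPochhammer ℂ (j:ℕ))]
  rw [vdm n]

theorem stmt7 :
    ∀ (n : ℕ), 1 ≤ n → ∀ (μ : ℂ),
      (umemuraU n μ).Monic ∧ (umemuraU n μ).natDegree = n * (n + 1) / 2 := by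
  intro n hn μ
  set N := n * (n + 1) / 2 with hNdef
  set M : Matrix (Fin n) (Fin n) (Polynomial ℂ) := Matrix.of fun i j : Fin n =>
      if (j : ℕ) ≤ 2 * (i : ℕ) + 1 then umemuraP (2 * (i : ℕ) + 1 - (j : ℕ)) μ else 0 with hM
  have hMapp : ∀ i j : Fin n, M i j =
      if (j : ℕ) ≤ 2 * (i : ℕ) + 1 then umemuraP (2 * (i : ℕ) + 1 - (j : ℕ)) μ else 0 :=
    fun i j => rfl
  have hdeg : ∀ i j : Fin n, (M i j).natDegree ≤ 2 * (i : ℕ) + 1 - (j : ℕ) := by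
    intro i j
    rw [hMapp]
    split
    · exact umemuraP_natDegree_le _ μ
    · simp
  have hcoeff : ∀ i j : Fin n, (M i j).coeff (2 * (i : ℕ) + 1 - (j : ℕ)) = Lmat n i j := by
    intro i j
    rw [hMapp, Lmat, Matrix.of_apply]
    split
    · exact umemuraP_coeff_self _ μ
    · simp
  -- Gauss sums
  have hs2 : (∑ i ∈ range n, i) * 2 = n * (n - 1) := Finset.sum_range_id_mul_two n
  have hN : N = (∑ i ∈ range n, i) + n := by
    have h3 := Finset.sum_range_id (n+1)
    rw [Finset.sum_range_succ, Nat.add_sub_cancel] at h3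
    rw [hNdef, mul_comm]
    omega
  have hperm : ∀ σ : Equiv.Perm (Fin n), (∀ i : Fin n, (i:ℕ) ≤ 2 * ((σ i : Fin n) : ℕ) + 1) →
      ∑ i : Fin n, (2 * ((σ i : Fin n) : ℕ) + 1 - (i : ℕ)) = N := by
    intro σ hσ
    have hsub : ∑ i : Fin n, (2 * ((σ i : Fin n) : ℕ) + 1 - (i : ℕ))
        = (∑ i : Fin n, (2 * ((σ i : Fin n) : ℕ) + 1)) - (∑ i : Fin n, (i : ℕ)) :=
      Finset.sum_tsub_distrib Finset.univ (fun i _ => hσ i)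
    have hσsum : ∑ i : Fin n, ((σ i : Fin n) : ℕ) = ∑ i : Fin n, (i : ℕ) :=
      Equiv.sum_comp σ (fun i : Fin n => (i : ℕ))
    have hrange : ∑ i : Fin n, (i : ℕ) = ∑ i ∈ range n, i :=
      Fin.sum_univ_eq_sum_range (fun i => i) n
    rw [hsub, Finset.sum_add_distrib, ← Finset.mul_sum, hσsum, hrange]
    simp only [Finset.sum_const, Finset.card_univ, Fintype.card_fin, smul_eq_mul, mul_one]
    omega
  -- degree bound for each permutation term
  have hproddeg : ∀ σ : Equiv.Perm (Fin n), (∏ i : Fin n, M (σ i) i).natDegree ≤ N := by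
    intro σ
    by_cases hσ : ∀ i : Fin n, (i:ℕ) ≤ 2 * ((σ i : Fin n) : ℕ) + 1
    · refine le_trans (natDegree_prod_le Finset.univ _) ?_
      rw [← hperm σ hσ]
      exact Finset.sum_le_sum fun i _ => hdeg (σ i) i
    · push_neg at hσ
      obtain ⟨i, hi⟩ := hσ
      have h0 : M (σ i) i = 0 := by rw [hMapp, if_neg (by omega)]
      rw [Finset.prod_eq_zero (s := Finset.univ) (f := fun j : Fin n => M (σ j) j)
        (Finset.mem_univ i) h0]
      simp
  -- coefficient at N of each permutation term
  have hprodcoeff : ∀ σ : Equiv.Perm (Fin n),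
      (∏ i : Fin n, M (σ i) i).coeff N = ∏ i : Fin n, Lmat n (σ i) i := by
    intro σ
    by_cases hσ : ∀ i : Fin n, (i:ℕ) ≤ 2 * ((σ i : Fin n) : ℕ) + 1
    · rw [← hperm σ hσ,
        coeff_prod_top Finset.univ _ (fun i : Fin n => 2 * ((σ i : Fin n) : ℕ) + 1 - (i : ℕ))
          (fun i _ => hdeg (σ i) i)]
      exact Finset.prod_congr rfl fun i _ => hcoeff (σ i) i
    · push_neg at hσ
      obtain ⟨i, hi⟩ := hσ
      have h0 : M (σ i) i = 0 := by rw [hMapp, if_neg (by omega)]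
      have h0' : Lmat n (σ i) i = 0 := by rw [Lmat, Matrix.of_apply, if_neg (by omega)]
      rw [Finset.prod_eq_zero (s := Finset.univ) (f := fun j : Fin n => M (σ j) j)
          (Finset.mem_univ i) h0,
        Finset.prod_eq_zero (s := Finset.univ) (f := fun j : Fin n => Lmat n (σ j) j)
          (Finset.mem_univ i) h0']
      simp
  -- determinant: degree bound
  have hdetdeg : M.det.natDegree ≤ N := by
    rw [Matrix.det_apply']
    apply natDegree_sum_le_of_forall_le
    intro σ _
    exact le_trans (natDegree_mul_le_of_le (le_of_eq (natDegree_intCast _)) (hproddeg σ))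
      (by omega)
  -- determinant: top coefficient
  have hdetcoeff : M.det.coeff N = (Lmat n).det := by
    rw [Matrix.det_apply', Matrix.det_apply', finset_sum_coeff]
    apply Finset.sum_congr rfl
    intro σ _
    rw [show ((Equiv.Perm.sign σ : ℤ) : Polynomial ℂ) * (∏ i : Fin n, M (σ i) i)
        = (Equiv.Perm.sign σ : ℤ) • (∏ i : Fin n, M (σ i) i) from (zsmul_eq_mul _ _).symm,
      coeff_smul, hprodcoeff σ, zsmul_eq_mul]
  -- umemuraU = c • det M
  have hU : umemuraU n μ =
      ((∏ j ∈ Finset.Icc 1 n, ((2 * j + 1 : ℕ) : ℂ) ^ (n - j))) • M.det := rfl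
  -- top coefficient of U is 1
  have hFne : ((∏ i ∈ range n, (2*i+1).factorial : ℕ) : ℂ) ≠ 0 := by
    rw [Nat.cast_ne_zero]
    exact Finset.prod_ne_zero_iff.mpr fun i _ => Nat.factorial_ne_zero _
  have hUcoeff : (umemuraU n μ).coeff N = 1 := by
    rw [hU, coeff_smul, hdetcoeff, Lmat_det, smul_eq_mul]
    have hcast : (∏ j ∈ Finset.Icc 1 n, ((2 * j + 1 : ℕ) : ℂ) ^ (n - j))
        = ((∏ j ∈ Finset.Icc 1 n, (2 * j + 1)^(n-j) : ℕ) : ℂ) := by push_cast; ring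
    have hinv : (∏ i : Fin n, (((2*(i:ℕ)+1).factorial : ℂ))⁻¹)
        = (((∏ i ∈ range n, (2*i+1).factorial : ℕ) : ℂ))⁻¹ := by
      rw [Finset.prod_inv_distrib]
      congr 1
      push_cast
      rw [Fin.prod_univ_eq_prod_range (fun i => (((2*i+1).factorial : ℂ))) n]
    rw [hcast, hinv]
    have hkey : ((∏ j ∈ Finset.Icc 1 n, (2 * j + 1)^(n-j) : ℕ) : ℂ) *
        ((2:ℂ)^(∑ i ∈ range n, i) * ((∏ x ∈ range n, x.factorial : ℕ) : ℂ))
        = ((∏ i ∈ range n, (2*i+1).factorial : ℕ) : ℂ) := by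
      rw [← keyNat n]
      push_cast
      ring
    rw [show ((∏ j ∈ Finset.Icc 1 n, (2 * j + 1)^(n-j) : ℕ) : ℂ) *
        ((((∏ i ∈ range n, (2*i+1).factorial : ℕ) : ℂ))⁻¹ *
          ((2:ℂ)^(∑ i ∈ range n, i) * ((∏ x ∈ range n, x.factorial : ℕ) : ℂ)))
        = (((∏ j ∈ Finset.Icc 1 n, (2 * j + 1)^(n-j) : ℕ) : ℂ) *
          ((2:ℂ)^(∑ i ∈ range n, i) * ((∏ x ∈ range n, x.factorial : ℕ) : ℂ))) *
          (((∏ i ∈ range n, (2*i+1).factorial : ℕ) : ℂ))⁻¹ from by ring,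
      hkey, mul_inv_cancel₀ hFne]
  have hUdeg : (umemuraU n μ).natDegree ≤ N := by
    rw [hU]
    refine le_trans (natDegree_smul_le _ _) hdetdeg
  have hNdeg : (umemuraU n μ).natDegree = N :=
    le_antisymm hUdeg (le_natDegree_of_ne_zero (by rw [hUcoeff]; exact one_ne_zero))
  constructor
  · rw [Polynomial.Monic, Polynomial.leadingCoeff, hNdeg, hUcoeff]
  · exact hNdeg
end

section
/- When μ = 0, the Umemura polynomial satisfies U_n(z;0) = z^{n(n+1)/2} for all n ≥ 1; that is, zero is a root of multiplicity n(n+1)/2. -/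
/-! The right-hand side of the recurrence at `μ = 0` sends `X ^ k` to `X ^ (2 * k + 1)`: for a
homogeneous `p` (Euler's identity `X * p' = k * p`) the derivative terms cancel. Since the
triangular numbers `t n = n * (n + 1) / 2` satisfy `t (n + 1) + t (n - 1) = 2 * t n + 1`,
the recurrence is solved by `U n = X ^ t n`, and it determines `U (n + 1)` because `U (n - 1)`
is monic. -/

open Polynomial

namespace Umemura

variable {R : Type*} [CommRing R]

noncomputable def recurrenceRhs (μ : R) (p : R[X]) : R[X] :=
  -X * (p * derivative (derivative p) - derivative p ^ 2) - p * derivative p + (X + C μ) * p ^ 2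

theorem X_mul_derivative_X_pow (k : ℕ) :
    X * derivative (X ^ k : R[X]) = C (k : R) * X ^ k := by
  cases k with
  | zero => simp
  | succ k => rw [derivative_X_pow, Nat.add_sub_cancel, pow_succ]; ring

theorem recurrenceRhs_of_X_mul_derivative_eq (μ : R) {p : R[X]} {c : R}
    (hp : X * derivative p = C c * p) : recurrenceRhs μ p = (X + C μ) * p ^ 2 := by
  have hp' : derivative p + X * derivative (derivative p) = C c * derivative p := by
    simpa [derivative_mul] using congrArg derivative hp
  rw [recurrenceRhs]
  linear_combination derivative p * hp - p * hp'

theorem recurrenceRhs_zero_X_pow (k : ℕ) :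
    recurrenceRhs (0 : R) (X ^ k) = X ^ (2 * k + 1) := by
  rw [recurrenceRhs_of_X_mul_derivative_eq 0 (X_mul_derivative_X_pow k), C_0]
  ring

theorem triangle_succ (n : ℕ) : (n + 1) * (n + 2) / 2 = n * (n + 1) / 2 + (n + 1) := by
  rw [show (n + 1) * (n + 2) = n * (n + 1) + (n + 1) * 2 by ring,
    Nat.add_mul_div_right _ _ two_pos]

theorem eq_X_pow_triangle_of_recurrence (U : ℤ → R[X]) (h_neg_one : U (-1) = 1)
    (h_zero : U 0 = 1)
    (hrec : ∀ n : ℤ, 0 ≤ n → U (n + 1) * U (n - 1) = recurrenceRhs 0 (U n)) (n : ℕ) :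
    U n = X ^ (n * (n + 1) / 2) := by
  have h_one : U 1 = X := by
    have step := hrec 0 le_rfl
    rw [zero_add, zero_sub, h_neg_one, mul_one, h_zero, ← pow_zero X,
      recurrenceRhs_zero_X_pow] at step
    simpa using step
  suffices h : U n = X ^ (n * (n + 1) / 2) ∧ U (n + 1) = X ^ ((n + 1) * (n + 2) / 2) from h.1
  induction n with
  | zero => simp [h_zero, h_one]
  | succ n ih =>
    refine ⟨by exact_mod_cast ih.2, ?_⟩
    have step := hrec (n + 1) (by positivity)
    rw [add_sub_cancel_right, ih.1, ih.2, recurrenceRhs_zero_X_pow] at step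
    have h_exp : 2 * ((n + 1) * (n + 2) / 2) + 1 = (n + 2) * (n + 3) / 2 + n * (n + 1) / 2 := by
      have h₁ : (n + 2) * (n + 3) / 2 = (n + 1) * (n + 2) / 2 + (n + 2) := triangle_succ (n + 1)
      have h₀ := triangle_succ n
      omega
    push_cast
    rw [h_exp, pow_add] at step
    exact (monic_X_pow _).isRegular.right (by simpa [add_assoc] using step)

end Umemura

theorem stmt9 :
    ∀ (U : ℤ → Polynomial ℂ),
      U (-1) = 1 → U 0 = 1 →
      (∀ n : ℤ, 0 ≤ n →
        U (n + 1) * U (n - 1) =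
          -Polynomial.X *
              (U n * Polynomial.derivative (Polynomial.derivative (U n)) -
                (Polynomial.derivative (U n)) ^ 2) -
            U n * Polynomial.derivative (U n) +
            (Polynomial.X + Polynomial.C (0 : ℂ)) * (U n) ^ 2) →
      ∀ n : ℕ, 1 ≤ n → U (n : ℤ) = Polynomial.X ^ (n * (n + 1) / 2) :=
  fun U h_neg_one h_zero hrec n _ =>
    Umemura.eq_X_pow_triangle_of_recurrence U h_neg_one h_zero hrec n
end

section
/- The Umemura polynomial equals a shifted Adler-Moser polynomial: U_n(z; μ) = Θ_n(z + μ), where Θ_n is the Adler-Moser polynomial with parameters κ_j = μ/(2j+1) for 1 ≤ j ≤ n−1. -/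
/-- The series `zε + ∑_{j≥1} κ_j ε^{2j+1}` over `ℂ[z]`. -/
noncomputable def genSeriesAM (κ : ℕ → ℂ) : PowerSeries (Polynomial ℂ) :=
  PowerSeries.mk fun n =>
    (if n = 1 then Polynomial.X else 0) +
      (if 3 ≤ n ∧ Odd n then Polynomial.C (κ ((n - 1) / 2)) else 0)

/-- The polynomials `θ_k(z)` defined by `∑_{k≥0} θ_k(z) ε^k = exp(zε + ∑_{j≥1} κ_j ε^{2j+1})`. -/
noncomputable def adlerMoserTheta (κ : ℕ → ℂ) (k : ℕ) : Polynomial ℂ :=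
  PowerSeries.coeff k (myExp (genSeriesAM κ))

/-- The Adler–Moser polynomial `Θ_n(z) = c_n · det(θ_{2i-j}(z))_{1≤i,j≤n}`. -/
noncomputable def adlerMoser (n : ℕ) (κ : ℕ → ℂ) : Polynomial ℂ :=
  ((∏ j ∈ Finset.Icc 1 n, ((2 * j + 1 : ℕ) : ℂ) ^ (n - j))) •
    Matrix.det (Matrix.of fun i j : Fin n =>
      if (j : ℕ) ≤ 2 * (i : ℕ) + 1 then adlerMoserTheta κ (2 * (i : ℕ) + 1 - (j : ℕ)) else 0)


noncomputable def compHom (μ : ℂ) : Polynomial ℂ →+* Polynomial ℂ :=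
  (Polynomial.aeval (Polynomial.X + Polynomial.C μ)).toRingHom

lemma compHom_apply (μ : ℂ) (p : Polynomial ℂ) :
    compHom μ p = p.comp (Polynomial.X + Polynomial.C μ) := by
  simp [compHom, Polynomial.aeval_def, Polynomial.comp, Polynomial.algebraMap_eq]

lemma myExp_map (μ : ℂ) (f : PowerSeries (Polynomial ℂ)) :
    myExp (PowerSeries.map (compHom μ) f) = PowerSeries.map (compHom μ) (myExp f) := by
  refine PowerSeries.ext fun n => ?_
  simp only [myExp, PowerSeries.coeff_mk, PowerSeries.coeff_map]
  rw [map_sum (compHom μ) (fun k => ((Nat.factorial k : ℚ)⁻¹) • (PowerSeries.coeff n (f ^ k))) (Finset.range (n + 1))]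
  refine Finset.sum_congr rfl fun k _ => ?_
  rw [← map_pow, PowerSeries.coeff_map]
  exact (map_rat_smul (compHom μ).toAddMonoidHom _ _).symm

lemma genSeries_eq (μ : ℂ) :
    genSeries μ =
      PowerSeries.map (compHom μ) (genSeriesAM (fun j => μ / (2 * (j : ℂ) + 1))) := by
  ext n
  simp only [genSeries, genSeriesAM, PowerSeries.coeff_mk, PowerSeries.coeff_map, map_add]
  rcases Nat.even_or_odd n with he | ho
  · have h1 : n ≠ 1 := by rintro rfl; exact (Nat.not_even_iff.mpr rfl) he
    have h2 : ¬ Odd n := Nat.not_odd_iff_even.mpr he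
    simp [h1, h2]
  · rcases eq_or_ne n 1 with rfl | h1
    · simp [compHom_apply]
    · have h3 : 3 ≤ n := by
        obtain ⟨m, rfl⟩ := ho
        omega
      have hval : (2 * (((n - 1) / 2 : ℕ) : ℂ) + 1) = (n : ℂ) := by
        obtain ⟨m, rfl⟩ := ho
        push_cast [Nat.add_sub_cancel, Nat.mul_div_cancel_left m (by norm_num : 0 < 2)]
        ring
      simp [h1, h3, ho, compHom_apply, hval]

lemma compHom_smul (μ c : ℂ) (p : Polynomial ℂ) :
    compHom μ (c • p) = c • compHom μ p :=
  map_smul (Polynomial.aeval (Polynomial.X + Polynomial.C μ) :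
    Polynomial ℂ →ₐ[ℂ] Polynomial ℂ) c p

lemma umemuraP_eq (k : ℕ) (μ : ℂ) :
    umemuraP k μ = compHom μ (adlerMoserTheta (fun j => μ / (2 * (j : ℂ) + 1)) k) := by
  rw [umemuraP, adlerMoserTheta, genSeries_eq, myExp_map, PowerSeries.coeff_map]

theorem stmt10 :
    ∀ (n : ℕ) (μ : ℂ),
      umemuraU n μ =
        (adlerMoser n (fun j => μ / (2 * (j : ℂ) + 1))).comp
          (Polynomial.X + Polynomial.C μ) := by
  intro n μ
  rw [← compHom_apply]
  rw [umemuraU, adlerMoser, compHom_smul]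
  congr 1
  rw [RingHom.map_det]
  congr 1
  ext i j
  by_cases h : (j : ℕ) ≤ 2 * (i : ℕ) + 1 <;>
    simp [RingHom.mapMatrix_apply, Matrix.map_apply, h, umemuraP_eq]
end
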